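/- Consider the no-regret dynamics for g(w,p) = p^T A w - ½‖w‖_2² with weights α_t = t, where the w-player plays OFTL (giving w_t = (Σ_{s≤t} α_s)^{-1} A^T(Σ_{s<t} α_s p_s + α_t p_{t-1})) and the p-player plays FTRL⁺ with entropy regularizer and step size 1/4 starting from the uniform distribution. If rows of A have ℓ2-norm at most 1, then the weighted regret of the w-player satisfies R^w ≤ 2 Σ_{t=1}^T ‖p_t - p_{t-1}‖_1². -/

import Mathlib

namespace SPW

noncomputable def Sr (t : ℕ) : ℝ := ((t:ℝ) * (t+1)) / 2

def qv {n : ℕ} (p : ℕ → Fin n → ℝ) (t : ℕ) : Fin n → ℝ :=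
  ∑ s ∈ Finset.Icc 1 t, (s:ℝ) • p s

noncomputable def hh {n d : ℕ} (A : Matrix (Fin n) (Fin d) ℝ) (p : ℕ → Fin n → ℝ)
    (t : ℕ) (w : Fin d → ℝ) : ℝ :=
  -(∑ i, p t i * A.mulVec w i) + (1/2) * ∑ j, (w j)^2

noncomputable def vv {n d : ℕ} (A : Matrix (Fin n) (Fin d) ℝ) (p : ℕ → Fin n → ℝ)
    (t : ℕ) : Fin d → ℝ := A.transpose.mulVec (qv p t)

noncomputable def uu {n d : ℕ} (A : Matrix (Fin n) (Fin d) ℝ) (p : ℕ → Fin n → ℝ)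
    (t : ℕ) : Fin d → ℝ := (Sr t)⁻¹ • vv A p t

noncomputable def cc {n d : ℕ} (A : Matrix (Fin n) (Fin d) ℝ) (p : ℕ → Fin n → ℝ)
    (t : ℕ) : ℝ := (∑ j, (vv A p t j)^2) / (2 * Sr t)

noncomputable def Gq {n d : ℕ} (A : Matrix (Fin n) (Fin d) ℝ) (p : ℕ → Fin n → ℝ)
    (t : ℕ) (w : Fin d → ℝ) : ℝ :=
  Sr t / 2 * (∑ j, (w j - uu A p t j)^2) - cc A p t

noncomputable def Fs {n d : ℕ} (A : Matrix (Fin n) (Fin d) ℝ) (p : ℕ → Fin n → ℝ)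
    (t : ℕ) (w : Fin d → ℝ) : ℝ :=
  ∑ s ∈ Finset.Icc 1 t, (s:ℝ) * hh A p s w

lemma Sr_pos {t : ℕ} (ht : 1 ≤ t) : 0 < Sr t := by
  unfold Sr
  have : (1:ℝ) ≤ (t:ℝ) := by exact_mod_cast ht
  nlinarith

lemma Sr_nonneg (t : ℕ) : 0 ≤ Sr t := by
  unfold Sr; positivity

lemma sum_Icc_cast (t : ℕ) : ∑ s ∈ Finset.Icc 1 t, (s:ℝ) = Sr t := by
  induction t with
  | zero => simp [Sr]
  | succ m ih =>
      rw [Finset.sum_Icc_succ_top (Nat.succ_le_succ (Nat.zero_le m)), ih]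
      unfold Sr
      push_cast
      ring

lemma quad (c : ℝ) (hc : c ≠ 0) {d : ℕ} (v w : Fin d → ℝ) :
    -(∑ j, v j * w j) + c/2 * ∑ j, (w j)^2
    = c/2 * ∑ j, (w j - c⁻¹ * v j)^2 - (∑ j, (v j)^2) / (2*c) := by
  have h : ∀ j : Fin d, (w j - c⁻¹ * v j)^2
      = (w j)^2 - 2*c⁻¹*(v j * w j) + c⁻¹^2 * (v j)^2 := by intro j; ring
  simp only [h, Finset.sum_add_distrib, Finset.sum_sub_distrib, ← Finset.mul_sum]
  field_simp
  ring

lemma dot_swap {n d : ℕ} (A : Matrix (Fin n) (Fin d) ℝ) (q : Fin n → ℝ) (w : Fin d → ℝ) :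
    ∑ i, q i * A.mulVec w i = ∑ j, A.transpose.mulVec q j * w j := by
  simp only [Matrix.mulVec, dotProduct, Matrix.transpose_apply,
    Finset.mul_sum, Finset.sum_mul]
  rw [Finset.sum_comm]
  apply Finset.sum_congr rfl
  intro j _
  apply Finset.sum_congr rfl
  intro i _
  ring

lemma Fs_expand {n d : ℕ} (A : Matrix (Fin n) (Fin d) ℝ) (p : ℕ → Fin n → ℝ)
    (t : ℕ) (w : Fin d → ℝ) :
    Fs A p t w = -(∑ j, vv A p t j * w j) + Sr t / 2 * ∑ j, (w j)^2 := by
  unfold Fs hh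
  have hq : ∑ j, vv A p t j * w j = ∑ i, qv p t i * A.mulVec w i :=
    (dot_swap A (qv p t) w).symm
  rw [hq]
  simp only [mul_add, mul_neg, Finset.sum_add_distrib, Finset.sum_neg_distrib]
  congr 1
  · rw [neg_inj]
    simp only [qv, Finset.sum_apply, Pi.smul_apply, smul_eq_mul, Finset.sum_mul,
      Finset.mul_sum]
    rw [Finset.sum_comm]
    exact Finset.sum_congr rfl fun s _ => Finset.sum_congr rfl fun i _ => by ring
  · rw [← Finset.sum_mul, sum_Icc_cast]
    ring

lemma Fs_eq_Gq {n d : ℕ} (A : Matrix (Fin n) (Fin d) ℝ) (p : ℕ → Fin n → ℝ)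
    (t : ℕ) (w : Fin d → ℝ) : Fs A p t w = Gq A p t w := by
  rcases Nat.eq_zero_or_pos t with h0 | h1
  · subst h0
    have hv : vv A p 0 = 0 := by
      unfold vv qv
      simp
    simp [Fs, Gq, cc, hv, Sr]
  · have hS : Sr t ≠ 0 := ne_of_gt (Sr_pos h1)
    rw [Fs_expand, quad (Sr t) hS (vv A p t) w]
    unfold Gq cc uu
    simp [Pi.smul_apply, smul_eq_mul]

lemma Fs_step {n d : ℕ} (A : Matrix (Fin n) (Fin d) ℝ) (p : ℕ → Fin n → ℝ)
    {t : ℕ} (ht : 1 ≤ t) (w : Fin d → ℝ) :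
    (t:ℝ) * hh A p t w = Fs A p t w - Fs A p (t-1) w := by
  obtain ⟨m, rfl⟩ := Nat.exists_eq_add_of_le ht
  unfold Fs
  rw [show 1 + m - 1 = m by omega, show 1 + m = m + 1 by omega,
    Finset.sum_Icc_succ_top (Nat.succ_le_succ (Nat.zero_le m))]
  push_cast
  ring

lemma telescope (f : ℕ → ℝ) (T : ℕ) :
    ∑ t ∈ Finset.Icc 1 T, (f (t-1) - f t) = f 0 - f T := by
  induction T with
  | zero => simp
  | succ m ih =>
      rw [Finset.sum_Icc_succ_top (Nat.succ_le_succ (Nat.zero_le m)), ih]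
      simp

lemma normbound {n d : ℕ} (A : Matrix (Fin n) (Fin d) ℝ)
    (hA : ∀ i, Real.sqrt (∑ j, (A i j) ^ 2) ≤ 1) (x : Fin n → ℝ) :
    ∑ j, (∑ i, A i j * x i)^2 ≤ (∑ i, |x i|)^2 := by
  set y : Fin n → EuclideanSpace ℝ (Fin d) :=
    fun i => x i • (EuclideanSpace.equiv (Fin d) ℝ).symm (A i) with hy
  have hnorm : ‖∑ i, y i‖ ≤ ∑ i, |x i| := by
    calc ‖∑ i, y i‖ ≤ ∑ i, ‖y i‖ := norm_sum_le _ _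
    _ ≤ ∑ i, |x i| := by
        apply Finset.sum_le_sum
        intro i _
        rw [hy]
        simp only [norm_smul, Real.norm_eq_abs]
        have : ‖(EuclideanSpace.equiv (Fin d) ℝ).symm (A i)‖ ≤ 1 := by
          rw [EuclideanSpace.norm_eq]
          simpa using hA i
        nlinarith [abs_nonneg (x i)]
  have hsum : ∀ j, (∑ i, y i) j = ∑ i, A i j * x i := by
    intro j
    rw [hy]; rw [WithLp.ofLp_sum, Finset.sum_apply]
    simp [mul_comm]
  have h2 : Real.sqrt (∑ j, (∑ i, A i j * x i)^2) ≤ ∑ i, |x i| := by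
    have := EuclideanSpace.norm_eq (∑ i, y i)
    simp only [hsum, Real.norm_eq_abs, sq_abs] at this
    rw [← this]; exact hnorm
  have h3 : (0:ℝ) ≤ ∑ j, (∑ i, A i j * x i)^2 :=
    Finset.sum_nonneg fun j _ => sq_nonneg _
  nlinarith [Real.sq_sqrt h3, Real.sqrt_nonneg (∑ j, (∑ i, A i j * x i)^2),
    Finset.sum_nonneg (fun i (_ : i ∈ Finset.univ) => abs_nonneg (x i))]

lemma Bbound {n d : ℕ} (A : Matrix (Fin n) (Fin d) ℝ)
    (hA : ∀ i, Real.sqrt (∑ j, (A i j) ^ 2) ≤ 1) (p : ℕ → Fin n → ℝ)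
    {t : ℕ} (ht : 1 ≤ t) (wt : Fin d → ℝ)
    (hwt : wt = (Sr t)⁻¹ • A.transpose.mulVec (qv p (t-1) + (t:ℝ) • p (t-1))) :
    Sr t / 2 * ∑ j, (wt j - uu A p t j)^2 ≤ (∑ i, |p t i - p (t-1) i|)^2 := by
  have hS : (0:ℝ) < Sr t := Sr_pos ht
  have hq : qv p t = qv p (t-1) + (t:ℝ) • p t := by
    obtain ⟨m, rfl⟩ := Nat.exists_eq_add_of_le ht
    unfold qv
    rw [show 1 + m - 1 = m by omega, show 1 + m = m + 1 by omega,
      Finset.sum_Icc_succ_top (Nat.succ_le_succ (Nat.zero_le m))]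
  have hzj : ∀ j, wt j - uu A p t j
      = (t:ℝ)/Sr t * ∑ i, A i j * (p (t-1) i - p t i) := by
    intro j
    rw [hwt]
    unfold uu vv
    rw [hq]
    simp only [Matrix.mulVec, dotProduct, Matrix.transpose_apply,
      Pi.smul_apply, smul_eq_mul, Pi.add_apply, Finset.mul_sum,
      ← Finset.sum_sub_distrib]
    apply Finset.sum_congr rfl
    intro i _
    rw [div_eq_mul_inv]
    ring
  have hz := normbound A hA (fun i => p (t-1) i - p t i)
  have habs : (∑ i, |p (t-1) i - p t i|) = ∑ i, |p t i - p (t-1) i| := by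
    apply Finset.sum_congr rfl
    intro i _
    exact abs_sub_comm _ _
  calc Sr t / 2 * ∑ j, (wt j - uu A p t j)^2
      = (t:ℝ)^2/(2 * Sr t) * ∑ j, (∑ i, A i j * (p (t-1) i - p t i))^2 := by
        simp only [hzj, mul_pow, ← Finset.mul_sum, ← mul_assoc]
        congr 1
        field_simp
    _ ≤ 1 * (∑ i, |p t i - p (t-1) i|)^2 := by
        apply mul_le_mul
        · rw [div_le_one (by positivity)]
          unfold Sr
          have h1 : (1:ℝ) ≤ (t:ℝ) := by exact_mod_cast ht
          nlinarith
        · rw [← habs]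
          exact hz
        · exact Finset.sum_nonneg fun j _ => sq_nonneg _
        · norm_num
    _ = (∑ i, |p t i - p (t-1) i|)^2 := one_mul _

lemma cc_zero {n d : ℕ} (A : Matrix (Fin n) (Fin d) ℝ) (p : ℕ → Fin n → ℝ) :
    cc A p 0 = 0 := by
  have hv : vv A p 0 = 0 := by
    unfold vv qv
    simp
  simp [cc, hv]

end SPW

/-- In the smooth-Perceptron dynamics on `g(w,p) = pᵀAw - ½‖w‖₂²` with weights
`α t = t`, the `w`-player's OFTL update has the closed form
`w t = (∑_{s ≤ t} s)⁻¹ • Aᵀ (∑_{s < t} s • p s + t • p (t-1))`, and if the rows of `A`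
have Euclidean norm at most 1, its weighted regret (for losses
`h t w = -p tᵀ A w + ½‖w‖₂²`) is at most `2 ∑_{t=1}^T ‖p t - p (t-1)‖₁²`. -/
theorem smooth_perceptron_w_regret {n d T : ℕ} [NeZero n] (hT : 1 ≤ T)
    (A : Matrix (Fin n) (Fin d) ℝ)
    (hA : ∀ i, Real.sqrt (∑ j, (A i j) ^ 2) ≤ 1)
    (p : ℕ → (Fin n → ℝ))
    (hp0 : p 0 = fun _ => (n : ℝ)⁻¹)
    (hp : ∀ t, p t ∈ stdSimplex ℝ (Fin n))
    (w : ℕ → (Fin d → ℝ))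
    (hw : ∀ t, 1 ≤ t → w t = (((t : ℝ) * (t + 1)) / 2)⁻¹ •
      A.transpose.mulVec
        (∑ s ∈ Finset.Icc 1 (t - 1), (s : ℝ) • p s + (t : ℝ) • p (t - 1))) :
    ∀ ww : Fin d → ℝ,
      ∑ t ∈ Finset.Icc 1 T, (t : ℝ) *
          ((-(∑ i, p t i * A.mulVec (w t) i) + (1 / 2) * ∑ j, (w t j) ^ 2)
            - (-(∑ i, p t i * A.mulVec ww i) + (1 / 2) * ∑ j, (ww j) ^ 2)) ≤
        2 * ∑ t ∈ Finset.Icc 1 T, (∑ i, |p t i - p (t - 1) i|) ^ 2 := by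
  intro ww
  open SPW in
  have hLHS : ∑ t ∈ Finset.Icc 1 T, (t : ℝ) *
          ((-(∑ i, p t i * A.mulVec (w t) i) + (1 / 2) * ∑ j, (w t j) ^ 2)
            - (-(∑ i, p t i * A.mulVec ww i) + (1 / 2) * ∑ j, (ww j) ^ 2))
      = (∑ t ∈ Finset.Icc 1 T, (t:ℝ) * hh A p t (w t)) - Fs A p T ww := by
    unfold Fs hh
    rw [← Finset.sum_sub_distrib]
    apply Finset.sum_congr rfl
    intro t _
    ring
  rw [hLHS]
  -- rewrite running sum via Gq telescoping
  have h1 : ∑ t ∈ Finset.Icc 1 T, (t:ℝ) * SPW.hh A p t (w t)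
      = ∑ t ∈ Finset.Icc 1 T, (SPW.Gq A p t (w t) - SPW.Gq A p (t-1) (w t)) := by
    apply Finset.sum_congr rfl
    intro t htm
    have ht : 1 ≤ t := (Finset.mem_Icc.mp htm).1
    rw [SPW.Fs_step A p ht, SPW.Fs_eq_Gq, SPW.Fs_eq_Gq]
  have h2 : ∀ t ∈ Finset.Icc 1 T, SPW.Gq A p t (w t) - SPW.Gq A p (t-1) (w t)
      ≤ (∑ i, |p t i - p (t-1) i|)^2 + (SPW.cc A p (t-1) - SPW.cc A p t) := by
    intro t htm
    have ht : 1 ≤ t := (Finset.mem_Icc.mp htm).1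
    have hB : SPW.Sr t / 2 * ∑ j, (w t j - SPW.uu A p t j)^2
        ≤ (∑ i, |p t i - p (t-1) i|)^2 :=
      SPW.Bbound A hA p ht (w t) (hw t ht)
    have hpos : 0 ≤ SPW.Sr (t-1) / 2 * ∑ j, (w t j - SPW.uu A p (t-1) j)^2 := by
      have := SPW.Sr_nonneg (t-1)
      have : (0:ℝ) ≤ ∑ j, (w t j - SPW.uu A p (t-1) j)^2 :=
        Finset.sum_nonneg fun j _ => sq_nonneg _
      positivity
    unfold SPW.Gq
    nlinarith [hB, hpos]
  have h3 : ∑ t ∈ Finset.Icc 1 T, (SPW.Gq A p t (w t) - SPW.Gq A p (t-1) (w t))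
      ≤ (∑ t ∈ Finset.Icc 1 T, (∑ i, |p t i - p (t-1) i|)^2)
        + (SPW.cc A p 0 - SPW.cc A p T) := by
    calc ∑ t ∈ Finset.Icc 1 T, (SPW.Gq A p t (w t) - SPW.Gq A p (t-1) (w t))
        ≤ ∑ t ∈ Finset.Icc 1 T,
            ((∑ i, |p t i - p (t-1) i|)^2 + (SPW.cc A p (t-1) - SPW.cc A p t)) :=
          Finset.sum_le_sum h2
      _ = (∑ t ∈ Finset.Icc 1 T, (∑ i, |p t i - p (t-1) i|)^2)
          + (SPW.cc A p 0 - SPW.cc A p T) := by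
          rw [Finset.sum_add_distrib, SPW.telescope (SPW.cc A p) T]
  have h4 : -(SPW.cc A p T) ≤ SPW.Fs A p T ww := by
    rw [SPW.Fs_eq_Gq]
    unfold SPW.Gq
    have h5 : (0:ℝ) ≤ SPW.Sr T / 2 * ∑ j, (ww j - SPW.uu A p T j)^2 := by
      have ha := SPW.Sr_nonneg T
      have hb : (0:ℝ) ≤ ∑ j, (ww j - SPW.uu A p T j)^2 :=
        Finset.sum_nonneg fun j _ => sq_nonneg _
      positivity
    linarith
  have hsq : (0:ℝ) ≤ ∑ t ∈ Finset.Icc 1 T, (∑ i, |p t i - p (t-1) i|)^2 :=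
    Finset.sum_nonneg fun t _ => sq_nonneg _
  rw [SPW.cc_zero] at h3
  linarith [h1 ▸ h3]
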